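/- Let φ : [0,∞) → (0,1] be continuous, monotonically decreasing to zero, with sub-exponential decay (log(φ(n))/n → 0 as n → ∞). Then there is no bi-Lipschitz homeomorphism of ℝ² which maps the spiral C_φ onto the line segment {(t, 0) : 0 ≤ t ≤ 1}. -/

import Mathlib

open Filter Real

noncomputable section

/-- The point `(x, y)` in the Euclidean plane. -/
def V2 (x y : ℝ) : EuclideanSpace ℝ (Fin 2) := (WithLp.equiv 2 (Fin 2 → ℝ)).symm ![x, y]

/-- The spiral `C_φ = {φ(t)(cos t, sin t) : t ≥ 0} ∪ {0}`. -/
def spiral (φ : ℝ → ℝ) : Set (EuclideanSpace ℝ (Fin 2)) :=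
  {p | ∃ t : ℝ, 0 ≤ t ∧ p = φ t • V2 (Real.cos t) (Real.sin t)} ∪ {0}

/-- `h` is bi-Lipschitz with constant `L`. -/
def BiLip {d : ℕ} (L : ℝ) (h : EuclideanSpace ℝ (Fin d) → EuclideanSpace ℝ (Fin d)) : Prop :=
  ∀ x y, (1 / L) * ‖x - y‖ ≤ ‖h x - h y‖ ∧ ‖h x - h y‖ ≤ L * ‖x - y‖

/-- The set of asymptotic directions of `A` at `o`. -/
def asymDirs {d : ℕ} (A : Set (EuclideanSpace ℝ (Fin d))) (o : EuclideanSpace ℝ (Fin d)) :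
    Set (EuclideanSpace ℝ (Fin d)) :=
  {u | ‖u‖ = 1 ∧ ∃ a : ℕ → EuclideanSpace ℝ (Fin d), (∀ n, a n ∈ A) ∧ (∀ n, a n ≠ o) ∧
    Tendsto a atTop (nhds o) ∧
    Tendsto (fun n => ‖a n - o‖⁻¹ • (a n - o)) atTop (nhds u)}

/-- The cone at `o` over the set of asymptotic directions of `A` at `o`. -/
def cone {d : ℕ} (A : Set (EuclideanSpace ℝ (Fin d))) (o : EuclideanSpace ℝ (Fin d)) :
    Set (EuclideanSpace ℝ (Fin d)) :=
  {x | ∃ t : ℝ, 0 ≤ t ∧ ∃ u ∈ asymDirs A o, x = t • u}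

/- ### Auxiliary lemmas -/

lemma V2_smul (s x y : ℝ) : s • V2 x y = V2 (s*x) (s*y) := by
  ext i; fin_cases i <;> simp [V2]

lemma V2_sub (a b c d : ℝ) : V2 a b - V2 c d = V2 (a-c) (b-d) := by
  ext i; fin_cases i <;> simp [V2]

lemma norm_V2 (x y : ℝ) : ‖V2 x y‖ = Real.sqrt (x^2 + y^2) := by
  rw [EuclideanSpace.norm_eq]
  simp [V2, Fin.sum_univ_two, sq_abs]

lemma V2_apply0 (x y : ℝ) : V2 x y 0 = x := by simp [V2]

lemma V2_zero : V2 0 0 = 0 := by ext i; fin_cases i <;> simp [V2]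

lemma dist_V2 (a b : ℝ) : ‖V2 a 0 - V2 b 0‖ = |a - b| := by
  rw [V2_sub, norm_V2]
  simp [Real.sqrt_sq_eq_abs]

set_option maxHeartbeats 2000000 in
/-- There is no bi-Lipschitz homeomorphism of the plane mapping a spiral with sub-exponentially
decaying radii onto the segment `{(t, 0) : 0 ≤ t ≤ 1}`. -/
theorem no_unwinding_to_segment (φ : ℝ → ℝ) (hcont : ContinuousOn φ (Set.Ici 0))
    (hpos : ∀ t ∈ Set.Ici (0 : ℝ), 0 < φ t) (hle : ∀ t ∈ Set.Ici (0 : ℝ), φ t ≤ 1)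
    (hanti : AntitoneOn φ (Set.Ici 0)) (hlim : Tendsto φ atTop (nhds 0))
    (hsub : Tendsto (fun n : ℕ => Real.log (φ n) / n) atTop (nhds 0)) :
    ¬ ∃ h : EuclideanSpace ℝ (Fin 2) → EuclideanSpace ℝ (Fin 2),
        Function.Surjective h ∧ (∃ L > 0, BiLip L h) ∧
        h '' spiral φ = {p | ∃ t : ℝ, 0 ≤ t ∧ t ≤ 1 ∧ p = V2 t 0} := by
  rintro ⟨h, hsurj, ⟨L, hLpos, hbil⟩, himg⟩
  have hπ := Real.pi_pos
  -- h is injective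
  have hinj : Function.Injective h := by
    intro x y hxy
    have := (hbil x y).1
    rw [hxy, sub_self, norm_zero] at this
    have hx : ‖x - y‖ ≤ 0 := by
      have h1 : 0 < 1 / L := by positivity
      nlinarith [norm_nonneg (x - y)]
    have := le_antisymm hx (norm_nonneg _)
    rwa [norm_eq_zero, sub_eq_zero] at this
  -- the spiral parametrization
  set γ : ℝ → EuclideanSpace ℝ (Fin 2) := fun t => φ t • V2 (Real.cos t) (Real.sin t) with hγdef
  have hγV : ∀ t, γ t = V2 (φ t * Real.cos t) (φ t * Real.sin t) := by
    intro t; rw [hγdef]; exact V2_smul _ _ _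
  have hγnorm : ∀ t, 0 ≤ t → ‖γ t‖ = φ t := by
    intro t ht
    rw [hγV, norm_V2]
    have : (φ t * Real.cos t)^2 + (φ t * Real.sin t)^2 = (φ t)^2 := by
      have := Real.sin_sq_add_cos_sq t; nlinarith
    rw [this, Real.sqrt_sq (hpos t ht).le]
  have hγmem : ∀ t, 0 ≤ t → γ t ∈ spiral φ := fun t ht => Or.inl ⟨t, ht, rfl⟩
  have h0mem : (0 : EuclideanSpace ℝ (Fin 2)) ∈ spiral φ := Or.inr rfl
  have hseg : ∀ p ∈ spiral φ, ∃ x : ℝ, 0 ≤ x ∧ x ≤ 1 ∧ h p = V2 x 0 := by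
    intro p hp
    have : h p ∈ h '' spiral φ := ⟨p, hp, rfl⟩
    rw [himg] at this
    exact this
  -- coordinate functions
  set g : ℝ → ℝ := fun t => h (γ t) 0 with hgdef
  set x₀ : ℝ := h 0 0 with hx₀def
  have hg : ∀ t, 0 ≤ t → h (γ t) = V2 (g t) 0 := by
    intro t ht
    obtain ⟨x, _, _, hx⟩ := hseg (γ t) (hγmem t ht)
    have : g t = x := by rw [hgdef]; simp only; rw [hx, V2_apply0]
    rw [this, hx]
  have h0eq : h 0 = V2 x₀ 0 := by
    obtain ⟨x, _, _, hx⟩ := hseg 0 h0mem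
    have : x₀ = x := by rw [hx₀def, hx, V2_apply0]
    rw [this, hx]
  -- distance bounds
  have hub : ∀ t, 0 ≤ t → |g t - x₀| ≤ L * φ t := by
    intro t ht
    have := (hbil (γ t) 0).2
    rw [hg t ht, h0eq, dist_V2, sub_zero, hγnorm t ht] at this
    exact this
  have hlb : ∀ t, 0 ≤ t → φ t / L ≤ |g t - x₀| := by
    intro t ht
    have := (hbil (γ t) 0).1
    rw [hg t ht, h0eq, dist_V2, sub_zero, hγnorm t ht] at this
    calc φ t / L = 1 / L * φ t := by ring
    _ ≤ _ := this
  -- continuity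
  have hhc : Continuous h := by
    have : LipschitzWith (Real.toNNReal L) h := by
      apply LipschitzWith.of_dist_le_mul
      intro x y
      rw [Real.coe_toNNReal L hLpos.le, dist_eq_norm, dist_eq_norm]
      exact (hbil x y).2
    exact this.continuous
  have hγc : ContinuousOn γ (Set.Ici 0) := by
    apply hcont.smul
    apply Continuous.continuousOn
    unfold V2
    apply (PiLp.continuous_toLp (p := 2) (β := fun _ : Fin 2 => ℝ)).comp
    apply continuous_pi
    intro i
    fin_cases i
    · simpa using Real.continuous_cos
    · simpa using Real.continuous_sin
  have hgc : ContinuousOn g (Set.Ici 0) := by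
    have hcoord : Continuous (fun p : EuclideanSpace ℝ (Fin 2) => p 0) :=
      (continuous_apply (0 : Fin 2)).comp (PiLp.continuous_ofLp (p := 2) (β := fun _ : Fin 2 => ℝ))
    exact (hcoord.comp hhc).comp_continuousOn hγc
  -- norm between opposite points of the spiral
  have hpi : ∀ t, 0 ≤ t → ‖γ t - γ (t + π)‖ = φ t + φ (t + π) := by
    intro t ht
    have htπ : (0:ℝ) ≤ t + π := by linarith
    rw [hγV, hγV, Real.cos_add_pi, Real.sin_add_pi, V2_sub, norm_V2]
    have : (φ t * Real.cos t - φ (t+π) * -Real.cos t)^2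
        + (φ t * Real.sin t - φ (t+π) * -Real.sin t)^2 = (φ t + φ (t+π))^2 := by
      have := Real.sin_sq_add_cos_sq t; nlinarith
    rw [this, Real.sqrt_sq (by have := hpos t ht; have := hpos (t+π) htπ; linarith)]
  -- injectivity of γ on [0, ∞)
  have hγinj : ∀ u v, 0 ≤ u → 0 ≤ v → γ u = γ v → u = v := by
    have key : ∀ u v, 0 ≤ u → 0 ≤ v → u < v → γ u = γ v → False := by
      intro u v hu hv huv heq
      -- φ u = φ v
      have hφeq : φ u = φ v := by
        have := congrArg norm heq
        rwa [hγnorm u hu, hγnorm v hv] at this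
      have hφu : 0 < φ u := hpos u hu
      -- cos and sin agree
      have hc : Real.cos u = Real.cos v := by
        have h1 := congrArg (fun p => p 0) (hγV u ▸ hγV v ▸ heq)
        simp only [V2, WithLp.equiv_symm_apply, PiLp.toLp_apply, Matrix.cons_val_zero] at h1
        rw [hφeq] at h1
        exact mul_left_cancel₀ (by rw [← hφeq]; exact hφu.ne') h1
      have hs : Real.sin u = Real.sin v := by
        have h1 := congrArg (fun p => p 1) (hγV u ▸ hγV v ▸ heq)
        simp only [V2, WithLp.equiv_symm_apply, PiLp.toLp_apply, Matrix.cons_val_one, Matrix.head_cons] at h1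
        rw [hφeq] at h1
        exact mul_left_cancel₀ (by rw [← hφeq]; exact hφu.ne') h1
      -- v - u is a positive multiple of 2π
      have hcos1 : Real.cos (v - u) = 1 := by
        rw [Real.cos_sub, ← hc, ← hs]
        rw [← Real.sin_sq_add_cos_sq u]; ring
      obtain ⟨n, hn⟩ := (Real.cos_eq_one_iff _).1 hcos1
      have hnpos : (1:ℤ) ≤ n := by
        by_contra hcon
        push_neg at hcon
        have : (n:ℝ) ≤ 0 := by exact_mod_cast Int.lt_add_one_iff.mp (by exact_mod_cast hcon)
        nlinarith [hπ]
      have h2π : u + 2 * π ≤ v := by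
        have : (1:ℝ) * (2*π) ≤ (n:ℝ) * (2*π) := by
          apply mul_le_mul_of_nonneg_right _ (by positivity)
          exact_mod_cast hnpos
        linarith [hn]
      -- φ is constant on [u, u + 2π]
      have hconst : ∀ s ∈ Set.Icc u (u + 2*π), φ s = φ u := by
        intro s hs'
        have hs0 : (0:ℝ) ≤ s := by linarith [hs'.1]
        have h1 : φ s ≤ φ u := hanti (Set.mem_Ici.mpr hu) (Set.mem_Ici.mpr hs0) hs'.1
        have h2 : φ v ≤ φ s := hanti (Set.mem_Ici.mpr hs0) (Set.mem_Ici.mpr hv) (by linarith [hs'.2])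
        linarith [hφeq ▸ h2]
      -- γ (u + 2π) = γ u
      have hγper : γ (u + 2*π) = γ u := by
        rw [hγV, hγV, hconst (u + 2*π) ⟨by linarith, le_refl _⟩,
          Real.cos_add_two_pi, Real.sin_add_two_pi]
      -- the IVT step: some two antipodal points have the same image coordinate
      set F : ℝ → ℝ := fun θ => g (u + θ) - g (u + θ + π) with hFdef
      have hFc : ContinuousOn F (Set.Icc 0 π) := by
        apply ContinuousOn.sub
        · apply hgc.comp (Continuous.continuousOn (continuous_const.add continuous_id))
          intro θ hθ; simp only [Set.mem_Ici, id_eq, Pi.add_apply]; linarith [hθ.1]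
        · apply hgc.comp
            (Continuous.continuousOn ((continuous_const.add continuous_id).add continuous_const))
          intro θ hθ; simp only [Set.mem_Ici, id_eq, Pi.add_apply]; linarith [hθ.1]
      have hFpi : F π = - F 0 := by
        have : g (u + π + π) = g u := by
          rw [hgdef]; simp only
          rw [show u + π + π = u + 2*π by ring, hγper]
        rw [hFdef]; simp only
        rw [this, add_zero]
        ring
      have h0mem' : (0:ℝ) ∈ Set.uIcc (F 0) (F π) := by
        rw [hFpi]
        rcases le_total 0 (F 0) with hc0 | hc0
        · exact Set.mem_uIcc.2 (Or.inr ⟨by linarith, hc0⟩)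
        · exact Set.mem_uIcc.2 (Or.inl ⟨hc0, by linarith⟩)
      have huIcc : Set.uIcc (0:ℝ) π = Set.Icc 0 π := Set.uIcc_of_le hπ.le
      obtain ⟨θ, hθmem, hθeq⟩ := intermediate_value_uIcc (huIcc ▸ hFc) h0mem'
      rw [huIcc] at hθmem
      have hθ0 : (0:ℝ) ≤ u + θ := by linarith [hθmem.1]
      have hθ0' : (0:ℝ) ≤ u + θ + π := by linarith [hθmem.1]
      have hgeq : g (u + θ) = g (u + θ + π) := by
        have : F θ = 0 := hθeq
        rw [hFdef] at this; simp only at this; linarith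
      have : γ (u + θ) = γ (u + θ + π) := by
        apply hinj
        rw [hg _ hθ0, hg _ hθ0', hgeq]
      have hnorm0 := congrArg norm (sub_eq_zero.2 this)
      rw [hpi _ hθ0, norm_zero] at hnorm0
      have := hpos _ hθ0
      have := hpos _ hθ0'
      linarith
    intro u v hu hv heq
    rcases lt_trichotomy u v with hlt | heq' | hlt
    · exact absurd (key u v hu hv hlt heq) not_false
    · exact heq'
    · exact absurd (key v u hv hu hlt heq.symm) not_false
  -- g is injective on [0, ∞)
  have hginj : Set.InjOn g (Set.Ici 0) := by
    intro u hu v hv heq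
    apply hγinj u v hu hv
    apply hinj
    rw [hg u hu, hg v hv, heq]
  -- sign constancy of g - x₀
  have hne : ∀ t, 0 ≤ t → g t ≠ x₀ := by
    intro t ht hceq
    have h1 := hlb t ht
    rw [hceq, sub_self, abs_zero] at h1
    have h2 := hpos t ht
    have h3 : 0 < φ t / L := by positivity
    linarith
  have hsign : (∀ t, 0 ≤ t → x₀ < g t) ∨ (∀ t, 0 ≤ t → g t < x₀) := by
    by_contra hcon
    push_neg at hcon
    obtain ⟨⟨a, ha, hga⟩, ⟨b, hb, hgb⟩⟩ := hcon
    have hga' : g a < x₀ := lt_of_le_of_ne hga (hne a ha)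
    have hgb' : x₀ < g b := lt_of_le_of_ne hgb (Ne.symm (hne b hb))
    have hsub' : Set.uIcc a b ⊆ Set.Ici 0 := by
      intro r hr
      rcases Set.mem_uIcc.mp hr with ⟨h1, _⟩ | ⟨h1, _⟩ <;>
        · simp only [Set.mem_Ici]; linarith
    have hx₀mem : x₀ ∈ Set.uIcc (g a) (g b) :=
      Set.mem_uIcc.2 (Or.inl ⟨hga'.le, hgb'.le⟩)
    obtain ⟨r, hrmem, hreq⟩ := intermediate_value_uIcc (hgc.mono hsub') hx₀mem
    exact hne r (hsub' hrmem) hreq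
  -- the distance-to-h(0) function σ
  set σ : ℝ → ℝ := fun t => |g t - x₀| with hσdef
  have hσdiff : ∀ u v, 0 ≤ u → 0 ≤ v → |σ u - σ v| = |g u - g v| := by
    intro u v hu hv
    rcases hsign with hs | hs
    · rw [hσdef]; simp only
      rw [abs_of_pos (sub_pos.2 (hs u hu)), abs_of_pos (sub_pos.2 (hs v hv))]
      congr 1; ring
    · rw [hσdef]; simp only
      rw [abs_of_neg (sub_neg.2 (hs u hu)), abs_of_neg (sub_neg.2 (hs v hv))]
      rw [← abs_neg]; congr 1; ring
  have hσc : ContinuousOn σ (Set.Ici 0) := (hgc.sub continuousOn_const).abs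
  have hσinj : Set.InjOn σ (Set.Ici 0) := by
    intro u hu v hv heq
    apply hginj hu hv
    rcases hsign with hs | hs
    · rw [hσdef] at heq; simp only at heq
      rw [abs_of_pos (sub_pos.2 (hs u hu)), abs_of_pos (sub_pos.2 (hs v hv))] at heq
      linarith
    · rw [hσdef] at heq; simp only at heq
      rw [abs_of_neg (sub_neg.2 (hs u hu)), abs_of_neg (sub_neg.2 (hs v hv))] at heq
      linarith
  have hσub : ∀ t, 0 ≤ t → σ t ≤ L * φ t := hub
  have hσlb : ∀ t, 0 ≤ t → φ t / L ≤ σ t := hlb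
  have hσnn : ∀ t, 0 ≤ σ t := fun t => abs_nonneg _
  have hσlim : Tendsto σ atTop (nhds 0) := by
    have hupper : Tendsto (fun t => L * φ t) atTop (nhds 0) := by
      simpa using hlim.const_mul L
    apply tendsto_of_tendsto_of_tendsto_of_le_of_le' tendsto_const_nhds hupper
    · exact Eventually.of_forall hσnn
    · filter_upwards [eventually_ge_atTop (0:ℝ)] with t ht using hσub t ht
  -- σ is decreasing over half-turns
  have hdec : ∀ t, 0 ≤ t → σ (t + π) < σ t := by
    intro t ht
    by_contra hcon
    push_neg at hcon
    have htπ : (0:ℝ) ≤ t + π := by linarith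
    have hne' : σ t ≠ σ (t + π) := fun hc => by
      have := hσinj (Set.mem_Ici.mpr ht) (Set.mem_Ici.mpr htπ) hc
      linarith
    have hlt : σ t < σ (t + π) := lt_of_le_of_ne hcon hne'
    have hσt : 0 < σ t := lt_of_lt_of_le (div_pos (hpos t ht) hLpos) (hσlb t ht)
    have hev : ∀ᶠ T in atTop, σ T < σ t := hσlim.eventually (eventually_lt_nhds hσt)
    obtain ⟨T, hT1, hT2⟩ := (hev.and (eventually_ge_atTop (t + π))).exists
    have hIcc : Set.Icc (t+π) T ⊆ Set.Ici 0 := fun r hr => by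
      simp only [Set.mem_Ici]; linarith [hr.1]
    have hmem : σ t ∈ Set.Icc (σ T) (σ (t+π)) := ⟨hT1.le, hcon⟩
    obtain ⟨r, hrmem, hreq⟩ := intermediate_value_Icc' hT2 (hσc.mono hIcc) hmem
    have hrt : r = t := hσinj (hIcc hrmem) (Set.mem_Ici.mpr ht) hreq
    linarith [hrmem.1]
  -- quantitative decrease
  set q : ℝ := 1 - 1/(L+1)^2 with hqdef
  have hL1 : (0:ℝ) < L + 1 := by linarith
  have hqpos : 0 < q := by
    rw [hqdef]
    have : 1/(L+1)^2 < 1 := by rw [div_lt_one (by positivity)]; nlinarith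
    linarith
  have hq1 : q < 1 := by
    rw [hqdef]
    have : 0 < 1/(L+1)^2 := by positivity
    linarith
  have hq : ∀ t, 0 ≤ t → σ (t + π) ≤ q * σ t := by
    intro t ht
    have htπ : (0:ℝ) ≤ t + π := by linarith
    have hd := hσdiff t (t+π) ht htπ
    have hbd := (hbil (γ t) (γ (t+π))).1
    rw [hpi t ht] at hbd
    have himgeq : ‖h (γ t) - h (γ (t+π))‖ = |g t - g (t+π)| := by
      rw [hg t ht, hg _ htπ, dist_V2]
    rw [himgeq] at hbd
    have hdlt := hdec t ht
    have heq2 : σ t - σ (t+π) = |g t - g (t+π)| := by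
      rw [← hd, abs_of_pos (by linarith)]
    have hφπ : 0 < φ (t+π) := hpos _ htπ
    have hφt : 0 < φ t := hpos _ ht
    have h5 : φ t / L ≤ σ t - σ (t+π) := by
      rw [heq2]
      calc φ t / L = 1/L * φ t := by ring
        _ ≤ 1/L * (φ t + φ (t+π)) := by
            have hL' : 0 < 1/L := by positivity
            nlinarith
        _ ≤ _ := hbd
    have h6 : σ t ≤ L * φ t := hσub t ht
    have h7 : σ t / L^2 ≤ φ t / L := by
      rw [div_le_div_iff₀ (by positivity) (by positivity)]
      have h7a := mul_le_mul_of_nonneg_right h6 hLpos.le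
      have h7b : L * φ t * L = φ t * L^2 := by ring
      linarith
    have h8 : σ t / (L+1)^2 ≤ σ t / L^2 := by
      rw [div_le_div_iff₀ (by positivity) (by positivity)]
      have h8a : L^2 ≤ (L+1)^2 := by nlinarith
      exact mul_le_mul_of_nonneg_left h8a (hσnn t)
    have expand : q * σ t = σ t - σ t / (L+1)^2 := by rw [hqdef]; ring
    rw [expand]
    linarith [le_trans h8 (le_trans h7 h5)]
  have hσ0 : 0 < σ 0 := lt_of_lt_of_le (div_pos (hpos 0 (Set.mem_Ici.mpr le_rfl)) hLpos) (hσlb 0 le_rfl)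
  have hiter : ∀ n : ℕ, σ (n * π) ≤ q^n * σ 0 := by
    intro n
    induction n with
    | zero => norm_num
    | succ n ih =>
      have hn0 : (0:ℝ) ≤ n * π := by positivity
      have hstep : σ ((n:ℝ)*π + π) ≤ q * σ ((n:ℝ)*π) := hq _ hn0
      have hcast : ((n+1 : ℕ) : ℝ) * π = (n:ℝ)*π + π := by push_cast; ring
      calc σ ((n+1 : ℕ) * π) = σ ((n:ℝ)*π + π) := by rw [hcast]
        _ ≤ q * σ ((n:ℝ)*π) := hstep
        _ ≤ q * (q^n * σ 0) := mul_le_mul_of_nonneg_left ih hqpos.le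
        _ = q^(n+1) * σ 0 := by ring
  -- exponential decay of φ
  set C : ℝ := L * σ 0 with hCdef
  have hCpos : 0 < C := by rw [hCdef]; positivity
  have hφn : ∀ n : ℕ, φ ((n:ℝ) * π) ≤ C * q^n := by
    intro n
    have hn0 : (0:ℝ) ≤ n * π := by positivity
    have h1 := hσlb _ hn0
    rw [div_le_iff₀ hLpos] at h1
    calc φ ((n:ℝ)*π) ≤ σ ((n:ℝ)*π) * L := h1
      _ ≤ (q^n * σ 0) * L := by
          apply mul_le_mul_of_nonneg_right (hiter n) hLpos.le
      _ = C * q^n := by rw [hCdef]; ring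
  have hlogq : Real.log q < 0 := Real.log_neg hqpos hq1
  set c : ℝ := Real.log q / π with hcdef
  have hc0 : c < 0 := div_neg_of_neg_of_pos hlogq hπ
  -- the eventual bound on log φ m / m
  have hbound : ∀ᶠ m : ℕ in atTop, Real.log (φ m) / m ≤ (Real.log C - Real.log q)/m + c := by
    filter_upwards [eventually_ge_atTop 1] with m hm
    have hmpos : (0:ℝ) < m := by exact_mod_cast hm
    have hm0 : (0:ℝ) ≤ m := hmpos.le
    set n : ℕ := Nat.floor ((m:ℝ)/π) with hndef
    have hn1 : (n:ℝ) ≤ (m:ℝ)/π := Nat.floor_le (by positivity)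
    have hnm : (n:ℝ)*π ≤ m := by
      rw [← le_div_iff₀ hπ]; exact hn1
    have hn2 : (m:ℝ)/π < n + 1 := Nat.lt_floor_add_one _
    have hφm : φ m ≤ C * q^n :=
      le_trans (hanti (Set.mem_Ici.mpr (by positivity)) (Set.mem_Ici.mpr hm0) hnm) (hφn n)
    have hφmpos : 0 < φ m := hpos _ (Set.mem_Ici.mpr hm0)
    have hlog : Real.log (φ m) ≤ Real.log C + n * Real.log q := by
      calc Real.log (φ m) ≤ Real.log (C * q^n) := Real.log_le_log hφmpos hφm
        _ = Real.log C + Real.log (q^n) := Real.log_mul (ne_of_gt hCpos) (by positivity)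
        _ = Real.log C + n * Real.log q := by rw [Real.log_pow]
    have hnlog : (n:ℝ) * Real.log q ≤ ((m:ℝ)/π - 1) * Real.log q := by
      apply mul_le_mul_of_nonpos_right _ hlogq.le
      linarith
    have hkey : Real.log (φ m) ≤ (Real.log C - Real.log q) + (m:ℝ) * c := by
      have expand : ((m:ℝ)/π - 1) * Real.log q = (m:ℝ) * c - Real.log q := by
        rw [hcdef]; ring
      linarith
    calc Real.log (φ m) / m ≤ ((Real.log C - Real.log q) + (m:ℝ)*c)/m := by
          exact (div_le_div_iff_of_pos_right hmpos).mpr hkey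
      _ = (Real.log C - Real.log q)/m + c := by
          rw [add_div, mul_div_cancel_left₀ c (ne_of_gt hmpos)]
  have htend : Tendsto (fun m : ℕ => (Real.log C - Real.log q)/m + c) atTop (nhds c) := by
    have h1 : Tendsto (fun m : ℕ => (Real.log C - Real.log q)/m) atTop (nhds 0) :=
      tendsto_const_div_atTop_nhds_zero_nat _
    simpa using h1.add tendsto_const_nhds
  have h1 : ∀ᶠ m : ℕ in atTop, (Real.log C - Real.log q)/m + c < c/2 :=
    htend.eventually (eventually_lt_nhds (by linarith))
  have h2 : ∀ᶠ m : ℕ in atTop, c/2 < Real.log (φ m) / m :=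
    hsub.eventually (eventually_gt_nhds (by linarith))
  obtain ⟨m, hm1, hm2, hm3⟩ := (hbound.and (h1.and h2)).exists
  linarith [hm1, hm2, hm3]
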